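/- arXiv:2311.15699 — 6 statements merged into one kernel-verified Lean document; each statement's English description precedes it below -/
import Mathlib

section
/- Let y = (y_1, y_2, ..., y_n) be a vector of n positive integer car lengths with n ≥ 2. If the characteristic χ(y) equals n−1, then y_2 = y_3 = ... = y_n. -/
/-- Car with preference `pref` and length `len` fits at spot `s`:
`pref ≤ s`, the spots `s, s+1, ..., s+len-1` all lie in the lot `[1, m]`,
and none of them is occupied. -/
def FitsAt (occ : Finset ℕ) (m pref len s : ℕ) : Prop :=
  pref ≤ s ∧ s + len ≤ m + 1 ∧ ∀ t ∈ Finset.Ico s (s + len), t ∉ occ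

/-- The car parks at `s`: `s` is the least spot (≥ its preference) where it fits. -/
def ParksAt (occ : Finset ℕ) (m pref len s : ℕ) : Prop :=
  FitsAt occ m pref len s ∧ ∀ s' < s, ¬ FitsAt occ m pref len s'

/-- Every car in the list of (preference, length) pairs can park, with
cars entering in order, starting from the set `occ` of occupied spots. -/
inductive Park (m : ℕ) : Finset ℕ → List (ℕ × ℕ) → Prop
  | nil (occ : Finset ℕ) : Park m occ []
  | cons (occ : Finset ℕ) (pref len : ℕ) (rest : List (ℕ × ℕ)) (s : ℕ) :
      ParksAt occ m pref len s →
      Park m (occ ∪ Finset.Ico s (s + len)) rest →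
      Park m occ ((pref, len) :: rest)

/-- `x` is a parking assortment for the length vector `y`. -/
def PA (y x : List ℕ) : Prop :=
  x.length = y.length ∧ (∀ v ∈ x, 1 ≤ v ∧ v ≤ y.sum) ∧ Park y.sum ∅ (x.zip y)

/-- `x` is a (permutation) invariant parking assortment for `y`. -/
def PAinv (y x : List ℕ) : Prop :=
  ∀ x' : List ℕ, x.Perm x' → PA y x'

/-- The degree of `x`: the number of entries of `x` different from 1. -/
def deg (x : List ℕ) : ℕ := (x.filter (fun v => v ≠ 1)).length

/-- The characteristic of `y`: the greatest degree over all invariant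
parking assortments for `y`. -/
noncomputable def chi (y : List ℕ) : ℕ := sSup {d | ∃ x, PAinv y x ∧ deg x = d}

/-- The invariant solution set of `y`. -/
def Wset (y : List ℕ) : Set ℕ :=
  {w | PAinv y (List.replicate (y.length - 1) 1 ++ [w])}

/-!
If `χ(y) = n − 1`, some invariant assortment has a single preference equal to `1`; let `w ≥ 2`
be the least of the others. Reorder it so that the car preferring `w` enters first, and parks
at `w`, while the preference `1` goes to car `i ≥ 2`. All other cars prefer spots `≥ w`, so
only car `i` can ever occupy spots `1, …, w - 1`. As the lengths add up to the size of the lot,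
every spot gets filled, and car `i` cannot reach the occupied spot `w`; hence `y_i = w - 1`.
-/

open Finset

section Parking

variable {m : ℕ}

lemma FitsAt.disjoint {occ : Finset ℕ} {p len s : ℕ} (h : FitsAt occ m p len s) :
    Disjoint occ (Ico s (s + len)) :=
  disjoint_right.2 h.2.2

lemma FitsAt.Ico_subset_Icc {occ : Finset ℕ} {p len s : ℕ} (h : FitsAt occ m p len s)
    (hp : 1 ≤ p) : Ico s (s + len) ⊆ Icc 1 m := by
  intro t ht
  have := h.1
  have := h.2.1
  rw [mem_Ico] at ht
  rw [mem_Icc]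
  omega

lemma ParksAt.eq_pref_of_empty {p len s : ℕ} (h : ParksAt ∅ m p len s) : s = p := by
  obtain ⟨⟨hps, hsm, -⟩, hmin⟩ := h
  by_contra hne
  exact hmin p (by omega) ⟨le_rfl, by omega, by simp⟩

lemma Park.fills_lot {occ : Finset ℕ} {l : List (ℕ × ℕ)} (h : Park m occ l)
    (hsub : occ ⊆ Icc 1 m) (hpref : ∀ pc ∈ l, 1 ≤ pc.1)
    (hcard : occ.card + (l.map Prod.snd).sum = m) :
    ∀ t ∈ Icc 1 m, t ∈ occ ∨ ∃ pc ∈ l, pc.1 ≤ t := by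
  induction h with
  | nil occ =>
    intro t ht
    left
    rwa [eq_of_subset_of_card_le hsub (by simp_all)]
  | cons occ p len rest s hs _ ih =>
    intro t ht
    have hp : 1 ≤ p := hpref (p, len) List.mem_cons_self
    have hcard' : (occ ∪ Ico s (s + len)).card + (rest.map Prod.snd).sum = m := by
      rw [card_union_of_disjoint hs.1.disjoint, Nat.card_Ico]
      simp only [List.map_cons, List.sum_cons] at hcard
      omega
    rcases ih (union_subset hsub (hs.1.Ico_subset_Icc hp))
      (fun pc hpc => hpref pc (List.mem_cons_of_mem _ hpc)) hcard' t ht with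
      hocc | ⟨pc, hpc, hle⟩
    · rcases mem_union.1 hocc with hold | hnew
      · exact .inl hold
      · exact .inr ⟨(p, len), List.mem_cons_self, hs.1.1.trans (mem_Ico.1 hnew).1⟩
    · exact .inr ⟨pc, List.mem_cons_of_mem _ hpc, hle⟩

lemma Park.len_eq_of_unique_pref_one {w len : ℕ} (hw : 2 ≤ w) {l₂ : List (ℕ × ℕ)} :
    ∀ {occ : Finset ℕ} {l₁ : List (ℕ × ℕ)}, Park m occ (l₁ ++ (1, len) :: l₂) →
      occ ⊆ Icc 1 m → w ∈ occ → (∀ t ∈ occ, w ≤ t) → (∀ pc ∈ l₁ ++ l₂, w ≤ pc.1) →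
      occ.card + ((l₁ ++ (1, len) :: l₂).map Prod.snd).sum = m → len = w - 1
  | occ, [], h, hsub, hwocc, hocc, hpref, hcard => by
    cases h with | cons _ _ _ _ s hs hrest => ?_
    have hwm : w ≤ m := (mem_Icc.1 (hsub hwocc)).2
    have hcard' : (occ ∪ Ico s (s + len)).card + (l₂.map Prod.snd).sum = m := by
      rw [card_union_of_disjoint hs.1.disjoint, Nat.card_Ico]
      simp only [List.nil_append, List.map_cons, List.sum_cons] at hcard
      omega
    have hfills := hrest.fills_lot (union_subset hsub (hs.1.Ico_subset_Icc le_rfl))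
      (fun pc hpc => by have := hpref pc hpc; omega) hcard'
    have hnew : ∀ t, 1 ≤ t → t < w → t ∈ Ico s (s + len) := by
      intro t ht1 htw
      rcases hfills t (mem_Icc.2 ⟨ht1, by omega⟩) with htaken | ⟨pc, hpc, hle⟩
      · rcases mem_union.1 htaken with hold | hnew
        · exact absurd (hocc t hold) (by omega)
        · exact hnew
      · have := hpref pc hpc
        omega
    have h1 := mem_Ico.1 (hnew 1 le_rfl (by omega))
    have hw1 := mem_Ico.1 (hnew (w - 1) (by omega) (by omega))
    have hw : w ∉ Ico s (s + len) := fun hw => disjoint_left.1 hs.1.disjoint hwocc hw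
    rw [mem_Ico] at hw
    have := hs.1.1
    omega
  | occ, (p, len') :: l₁, h, hsub, hwocc, hocc, hpref, hcard => by
    cases h with | cons _ _ _ _ s hs hrest => ?_
    have hp : w ≤ p := hpref (p, len') List.mem_cons_self
    refine len_eq_of_unique_pref_one hw hrest
      (union_subset hsub (hs.1.Ico_subset_Icc (by omega))) (mem_union_left _ hwocc) ?_
      (fun pc hpc => hpref pc (List.mem_cons_of_mem _ hpc)) ?_
    · intro t ht
      rcases mem_union.1 ht with ht | ht
      · exact hocc t ht
      · have := hs.1.1
        have := (mem_Ico.1 ht).1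
        omega
    · rw [card_union_of_disjoint hs.1.disjoint, Nat.card_Ico]
      simp only [List.cons_append, List.map_cons, List.sum_cons] at hcard
      omega

end Parking

lemma PA.getD_eq_of_pref_one {y₀ w : ℕ} {ys l₁ l₂ : List ℕ}
    (h : PA (y₀ :: ys) (w :: (l₁ ++ 1 :: l₂))) (hy₀ : 0 < y₀) (hw : 2 ≤ w)
    (hl : ∀ v ∈ l₁ ++ l₂, w ≤ v) : ys.getD l₁.length 0 = w - 1 := by
  obtain ⟨hlen, -, hpark⟩ := h
  simp only [List.length_cons, List.length_append] at hlen
  have hk : l₁.length < ys.length := by omega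
  obtain ⟨ys₁, c, ys₂, rfl, hlen₁⟩ :
      ∃ ys₁ c ys₂, ys = ys₁ ++ c :: ys₂ ∧ l₁.length = ys₁.length :=
    ⟨ys.take l₁.length, ys[l₁.length], ys.drop (l₁.length + 1),
      by rw [List.getElem_cons_drop, List.take_append_drop], by rw [List.length_take]; omega⟩
  have hlen₂ : l₂.length = ys₂.length := by
    simp only [List.length_append, List.length_cons] at hlen
    omega
  rw [hlen₁, List.getD_append_right _ _ _ _ le_rfl, Nat.sub_self, List.getD_cons_zero]
  rw [List.zip_cons_cons, List.zip_append hlen₁, List.zip_cons_cons] at hpark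
  cases hpark with | cons _ _ _ _ s hs hrest => ?_
  obtain rfl := hs.eq_pref_of_empty
  refine hrest.len_eq_of_unique_pref_one hw ?_ ?_ ?_ ?_ ?_
  · rw [empty_union]
    exact hs.1.Ico_subset_Icc (by omega)
  · simp [hy₀]
  · simp +contextual
  · intro pc hpc
    rw [List.mem_append] at hpc
    apply hl
    rcases hpc with hpc | hpc
    · exact List.mem_append_left _ (List.of_mem_zip hpc).1
    · exact List.mem_append_right _ (List.of_mem_zip hpc).1
  · simp [List.map_snd_zip hlen₁.ge, List.map_snd_zip hlen₂.ge]

lemma count_one_add_deg (x : List ℕ) : x.count 1 + deg x = x.length := by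
  simp only [deg, List.count_eq_length_filter, ne_eq, decide_not]
  exact (x.length_eq_length_filter_add (· == 1)).symm

lemma exists_perm_one_cons_cons_of_deg {x : List ℕ} (hpos : ∀ v ∈ x, 1 ≤ v)
    (hdeg : deg x = x.length - 1) (hx : 2 ≤ x.length) :
    ∃ w r, x.Perm (1 :: w :: r) ∧ 2 ≤ w ∧ ∀ v ∈ r, w ≤ v := by
  have hcount : x.count 1 = 1 := by have := count_one_add_deg x; omega
  have h1 : 1 ∈ x := List.count_pos_iff.1 (by omega)
  have hF : ∀ v ∈ x.erase 1, 2 ≤ v := by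
    intro v hv
    have hv1 : v ≠ 1 := by
      rintro rfl
      have := List.count_pos_iff.2 hv
      rw [List.count_erase_self] at this
      omega
    have := hpos v (List.mem_of_mem_erase hv)
    omega
  have hFne : x.erase 1 ≠ [] := by
    rw [← List.length_pos_iff, List.length_erase_of_mem h1]
    omega
  have hw := List.min_mem hFne
  exact ⟨_, _, (List.perm_cons_erase h1).trans ((List.perm_cons_erase hw).cons 1), hF _ hw,
    fun v hv => List.min_le_of_mem (List.mem_of_mem_erase hv)⟩

lemma exists_PAinv_deg_eq_chi {y : List ℕ} (h : 0 < chi y) :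
    ∃ x, PAinv y x ∧ deg x = chi y := by
  have hne : {d | ∃ x, PAinv y x ∧ deg x = d}.Nonempty := by
    rw [Set.nonempty_iff_ne_empty]
    intro hempty
    simp [chi, hempty] at h
  have hbdd : BddAbove {d | ∃ x, PAinv y x ∧ deg x = d} := by
    refine ⟨y.length, ?_⟩
    rintro _ ⟨x, hx, rfl⟩
    exact (List.length_filter_le _ _).trans (hx x (.refl x)).1.le
  exact Nat.sSup_mem hne hbdd

lemma PAinv.exists_getD_eq_of_deg {y x : List ℕ} (hx : PAinv y x)
    (hdeg : deg x = y.length - 1) (hy : ∀ v ∈ y, 0 < v) :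
    ∃ c, ∀ i, 1 ≤ i → i < y.length → y.getD i 0 = c := by
  obtain ⟨hlen, hbound, -⟩ := hx x (.refl x)
  rcases y with _ | ⟨y₀, ys⟩
  · exact ⟨0, fun i _ hi => absurd hi (by simp)⟩
  simp only [List.length_cons] at hlen hdeg
  rcases Nat.lt_or_ge ys.length 1 with hys | hys
  · exact ⟨0, fun i hi1 hi => by simp only [List.length_cons] at hi; omega⟩
  obtain ⟨w, r, hperm, hw, hr⟩ := exists_perm_one_cons_cons_of_deg
    (fun v hv => (hbound v hv).1) (by rw [hlen, hdeg]) (by omega)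
  refine ⟨w - 1, fun i hi1 hi => ?_⟩
  obtain ⟨k, rfl⟩ : ∃ k, i = k + 1 := ⟨i - 1, by omega⟩
  have hrlen : r.length + 1 = ys.length := by
    have := hperm.length_eq
    simp only [List.length_cons] at this
    omega
  have hmid : (r.take k ++ 1 :: r.drop k).Perm (1 :: r) := by
    simpa using List.perm_middle (a := 1) (l₁ := r.take k) (l₂ := r.drop k)
  have hperm' : x.Perm (w :: (r.take k ++ 1 :: r.drop k)) :=
    hperm.trans ((List.Perm.swap w 1 r).trans (hmid.symm.cons w))
  have hc := (hx _ hperm').getD_eq_of_pref_one (hy y₀ List.mem_cons_self) hw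
    (fun v hv => hr v (by rwa [List.take_append_drop] at hv))
  rw [List.length_take, min_eq_left (by simp only [List.length_cons] at hi; omega)] at hc
  rw [List.getD_cons_succ, hc]

theorem stmt9_general (n : ℕ) (y : List ℕ) (hylen : y.length = n)
    (hypos : ∀ v ∈ y, 0 < v) (hchi : chi y = n - 1) :
    ∀ i j, 1 ≤ i → i < n → 1 ≤ j → j < n → y.getD i 0 = y.getD j 0 := by
  intro i j hi hin hj hjn
  obtain ⟨x, hx, hdeg⟩ := exists_PAinv_deg_eq_chi (y := y) (by omega)
  obtain ⟨c, hc⟩ := hx.exists_getD_eq_of_deg (by rw [hdeg, hchi, hylen]) hypos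
  rw [hc i hi (by omega), hc j hj (by omega)]

/-- if `χ(y) = n − 1` then `y₂ = y₃ = ⋯ = yₙ`. -/
theorem stmt9 (n : ℕ) (hn : 2 ≤ n) (y : List ℕ) (hylen : y.length = n)
    (hypos : ∀ v ∈ y, 0 < v) (hchi : chi y = n - 1) :
    ∀ i j, 1 ≤ i → i < n → 1 ≤ j → j < n → y.getD i 0 = y.getD j 0 :=
  stmt9_general n y hylen hypos hchi
end

section
/- Let y = (y_1, y_2, ..., y_n) be a vector of n positive integer car lengths, let d ∈ [n], and let w = (w_1,...,w_d) be a vector of d integers all greater than 1. If the vector (1^{n−d}, w), consisting of n−d entries equal to 1 followed by the entries of w, is in PAinv_n(y), then for every i ∈ [d], the vector (1^{n−d+1}, w_{î}) obtained by deleting the i-th entry of w and prepending one additional 1 is also in PAinv_n(y). -/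
/-!
Replacing one entry of an invariant parking assortment by a value no larger than every entry keeps
it invariant; with the value `1` this is the theorem. The point is that with exactly `y.sum` spots
every spot is eventually taken, and cars only park at or beyond their preference, so every spot
below the least preference `b` is taken before the first car arrives. A car preferring `v ≤ b` then
parks exactly where a car preferring `b` would. Induct on the number of cars: if the modified
vector starts with a genuine entry, it parks as in the original and we recurse; if it starts with
`v`, it parks like the entry `b`, and the remaining cars form a permutation of what is left after
`b` parks, with `a` in place of `b`, to which the induction hypothesis applies with `v := b`.
-/

open List

section Parking

variable {m : ℕ}

lemma ParksAt.unique {occ : Finset ℕ} {p l s s' : ℕ} (h : ParksAt occ m p l s)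
    (h' : ParksAt occ m p l s') : s = s' := by
  rcases lt_trichotomy s s' with hlt | heq | hgt
  · exact absurd h.1 (h'.2 s hlt)
  · exact heq
  · exact absurd h'.1 (h.2 s' hgt)

lemma Park.exists_parksAt_of_cons {occ : Finset ℕ} {p l : ℕ} {cars : List (ℕ × ℕ)}
    (h : Park m occ ((p, l) :: cars)) :
    ∃ s, ParksAt occ m p l s ∧ Park m (occ ∪ Finset.Ico s (s + l)) cars := by
  cases h with
  | cons _ _ _ _ s hs hrest => exact ⟨s, hs, hrest⟩

def Tight (m : ℕ) (occ : Finset ℕ) (y : List ℕ) : Prop :=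
  occ ⊆ Finset.Icc 1 m ∧ occ.card + y.sum = m

lemma Tight.union_Ico {occ : Finset ℕ} {c ℓ s : ℕ} {y : List ℕ} (h : Tight m occ (ℓ :: y))
    (hc : 1 ≤ c) (hs : ParksAt occ m c ℓ s) : Tight m (occ ∪ Finset.Ico s (s + ℓ)) y := by
  obtain ⟨hcs, hsm, hfree⟩ := hs.1
  have hdisj : Disjoint occ (Finset.Ico s (s + ℓ)) :=
    Finset.disjoint_right.2 hfree
  refine ⟨Finset.union_subset h.1 fun t ht => ?_, ?_⟩
  · simp only [Finset.mem_Ico] at ht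
    simp only [Finset.mem_Icc]
    omega
  · have := h.2
    rw [Finset.card_union_of_disjoint hdisj, Nat.card_Ico]
    simp only [List.sum_cons] at this
    omega

lemma Park.mem_of_lt_prefs : ∀ {occ : Finset ℕ} {cars : List (ℕ × ℕ)}, Park m occ cars →
    Tight m occ (cars.map Prod.snd) →
    ∀ t ∈ Finset.Icc 1 m, (∀ c ∈ cars, t < c.1) → t ∈ occ
  | occ, [], _, htight, t, ht, _ => by
    have hocc : occ = Finset.Icc 1 m :=
      Finset.eq_of_subset_of_card_le htight.1 (by simpa using htight.2.ge)
    rwa [hocc]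
  | occ, (p, l) :: cars, hpark, htight, t, ht, hlt => by
    obtain ⟨s, hs, hrest⟩ := hpark.exists_parksAt_of_cons
    have htp : t < p := hlt (p, l) mem_cons_self
    have hp : 1 ≤ p := (Finset.mem_Icc.1 ht).1.trans htp.le
    have hmem := hrest.mem_of_lt_prefs (htight.union_Ico hp hs) t ht
      fun c hc => hlt c (mem_cons_of_mem _ hc)
    rcases Finset.mem_union.1 hmem with h | h
    · exact h
    · have := hs.1.1
      simp only [Finset.mem_Ico] at h
      omega

lemma ParksAt.of_pref_le {occ : Finset ℕ} {v b l s : ℕ}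
    (hcov : ∀ t ∈ Finset.Icc 1 m, t < b → t ∈ occ) (hv : 1 ≤ v) (hvb : v ≤ b) (hl : 0 < l)
    (h : ParksAt occ m b l s) : ParksAt occ m v l s := by
  have hfits : ∀ s', FitsAt occ m v l s' → FitsAt occ m b l s' := by
    rintro s' ⟨hvs, hsm, hfree⟩
    refine ⟨?_, hsm, hfree⟩
    by_contra! hlt
    exact hfree s' (by simp only [Finset.mem_Ico]; omega)
      (hcov s' (by simp only [Finset.mem_Icc]; omega) hlt)
  obtain ⟨⟨hbs, hsm, hfree⟩, hleast⟩ := h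
  exact ⟨⟨hvb.trans hbs, hsm, hfree⟩, fun s' hs' hf => hleast s' hs' (hfits s' hf)⟩

def AllPermsPark (m : ℕ) (occ : Finset ℕ) (p y : List ℕ) : Prop :=
  ∀ q, p.Perm q → Park m occ (q.zip y)

lemma AllPermsPark.perm {occ : Finset ℕ} {p p' y : List ℕ} (h : AllPermsPark m occ p y)
    (hp : p.Perm p') : AllPermsPark m occ p' y :=
  fun q hq => h q (hp.trans hq)

lemma AllPermsPark.exists_parksAt_of_cons {occ : Finset ℕ} {c ℓ : ℕ} {t y : List ℕ}
    (h : AllPermsPark m occ (c :: t) (ℓ :: y)) :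
    ∃ s, ParksAt occ m c ℓ s ∧ AllPermsPark m (occ ∪ Finset.Ico s (s + ℓ)) t y := by
  obtain ⟨s, hs, -⟩ := (h (c :: t) (Perm.refl _)).exists_parksAt_of_cons
  refine ⟨s, hs, fun q hq => ?_⟩
  obtain ⟨s', hs', hrest⟩ := (h (c :: q) (hq.cons c)).exists_parksAt_of_cons
  rwa [hs'.unique hs] at hrest

lemma AllPermsPark.exists_parksAt_of_mem {occ : Finset ℕ} {a q ℓ : ℕ} {r y : List ℕ}
    (h : AllPermsPark m occ (a :: r) (ℓ :: y)) (hq : q ∈ r) :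
    ∃ s, ParksAt occ m q ℓ s ∧ AllPermsPark m (occ ∪ Finset.Ico s (s + ℓ)) (a :: r.erase q) y :=
  (h.perm (((perm_cons_erase hq).cons a).trans (Perm.swap _ _ _))).exists_parksAt_of_cons

lemma AllPermsPark.mem_of_lt_of_forall_le {occ : Finset ℕ} {p y : List ℕ} {b : ℕ}
    (h : AllPermsPark m occ p y) (htight : Tight m occ y) (hlen : p.length = y.length)
    (hb : ∀ e ∈ p, b ≤ e) : ∀ t ∈ Finset.Icc 1 m, t < b → t ∈ occ := fun t ht htb =>
  (h p (Perm.refl _)).mem_of_lt_prefs (by rwa [map_snd_zip hlen.ge]) t ht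
    fun c hc => htb.trans_le (hb c.1 (of_mem_zip hc).1)

theorem AllPermsPark.cons_of_le {y : List ℕ} (hy : ∀ ℓ ∈ y, 0 < ℓ) :
    ∀ {occ : Finset ℕ} {a v : ℕ} {r : List ℕ}, AllPermsPark m occ (a :: r) y →
    Tight m occ y → (a :: r).length = y.length →
    1 ≤ v → v ≤ a → (∀ e ∈ r, v ≤ e) → AllPermsPark m occ (v :: r) y := by
  induction y with
  | nil => intro _ _ _ _ _ _ hlen; simp at hlen
  | cons ℓ y ih =>
    intro occ a v r h htight hlen hv hva hvr
    rintro (_ | ⟨q, ρ⟩) hQ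
    · simp at hQ
    have ih' := @ih fun e he => hy e (mem_cons_of_mem _ he)
    have hlen_erase : ∀ {c}, c ∈ r → (a :: r.erase c).length = y.length := fun hc => by
      have := (perm_cons_erase hc).length_eq
      simp only [length_cons] at hlen this ⊢
      omega
    obtain ⟨hq, hρ⟩ := cons_perm_iff_perm_erase.1 hQ.symm
    by_cases hqv : q = v
    · subst hqv
      rw [erase_cons_head] at hρ
      -- the car preferring `q` parks where the least preference `b` of `a :: r` would
      obtain ⟨b, hb, hbmin⟩ := (a :: r).toFinset.exists_min_image id ⟨a, by simp⟩
      simp only [mem_toFinset, id] at hb hbmin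
      have hqb : q ≤ b := by
        rcases mem_cons.1 hb with rfl | hbr
        exacts [hva, hvr b hbr]
      have hb1 : 1 ≤ b := hv.trans hqb
      have hrest : ∃ s, ParksAt occ m b ℓ s ∧
          AllPermsPark m (occ ∪ Finset.Ico s (s + ℓ)) r y := by
        rcases mem_cons.1 hb with rfl | hbr
        · exact h.exists_parksAt_of_cons
        · obtain ⟨s, hs, hrest⟩ := h.exists_parksAt_of_mem hbr
          refine ⟨s, hs, (ih' hrest (htight.union_Ico hb1 hs) (hlen_erase hbr) hb1
            (hbmin a mem_cons_self) fun e he => hbmin e ?_).perm (perm_cons_erase hbr).symm⟩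
          exact mem_cons_of_mem _ (mem_of_mem_erase he)
      obtain ⟨s, hs, hrest⟩ := hrest
      have hcov := h.mem_of_lt_of_forall_le htight hlen hbmin
      exact Park.cons _ _ _ _ s (hs.of_pref_le hcov hv hqb (hy ℓ mem_cons_self))
        (hrest ρ hρ.symm)
    · have hqr : q ∈ r := (mem_cons.1 hq).resolve_left hqv
      rw [erase_cons_tail (by simpa using Ne.symm hqv)] at hρ
      obtain ⟨s, hs, hrest⟩ := h.exists_parksAt_of_mem hqr
      exact Park.cons _ _ _ _ s hs (ih' hrest (htight.union_Ico (hv.trans (hvr q hqr)) hs)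
        (hlen_erase hqr) hv hva (fun e he => hvr e (mem_of_mem_erase he)) ρ hρ.symm)

end Parking

lemma pAinv_iff {y x : List ℕ} : PAinv y x ↔
    x.length = y.length ∧ (∀ v ∈ x, 1 ≤ v ∧ v ≤ y.sum) ∧ AllPermsPark y.sum ∅ x y := by
  refine ⟨fun h => ⟨(h x (Perm.refl _)).1, (h x (Perm.refl _)).2.1,
    fun q hq => (h q hq).2.2⟩, ?_⟩
  rintro ⟨hlen, hbound, hpark⟩ x' hx'
  exact ⟨hx'.length_eq ▸ hlen, fun v hv => hbound v (hx'.symm.subset hv), hpark x' hx'⟩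

lemma PAinv.perm {y x x' : List ℕ} (h : PAinv y x) (hx : x.Perm x') : PAinv y x' :=
  fun x'' hx'' => h x'' (hx.trans hx'')

lemma PAinv.one_cons {y r : List ℕ} {a : ℕ} (hy : ∀ ℓ ∈ y, 0 < ℓ) (h : PAinv y (a :: r)) :
    PAinv y (1 :: r) := by
  obtain ⟨hlen, hbound, hpark⟩ := pAinv_iff.1 h
  refine pAinv_iff.2 ⟨by simpa using hlen, ?_, ?_⟩
  · intro v hv
    rcases mem_cons.1 hv with rfl | hvr
    · exact ⟨le_rfl, (hbound a mem_cons_self).1.trans (hbound a mem_cons_self).2⟩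
    · exact hbound v (mem_cons_of_mem _ hvr)
  · exact hpark.cons_of_le hy ⟨by simp, by simp⟩ hlen le_rfl (hbound a mem_cons_self).1
      fun e he => (hbound e (mem_cons_of_mem _ he)).1

theorem stmt10_general (n d : ℕ)
    (y : List ℕ) (hypos : ∀ v ∈ y, 0 < v)
    (w : List ℕ) (hwlen : w.length = d)
    (hx : PAinv y (List.replicate (n - d) 1 ++ w)) :
    ∀ i < d, PAinv y (List.replicate (n - d + 1) 1 ++ w.eraseIdx i) := by
  intro i hi
  have hiw : i < w.length := hwlen ▸ hi
  have hperm : (replicate (n - d) 1 ++ w).Perm (w[i] :: (replicate (n - d) 1 ++ w.eraseIdx i)) :=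
    ((getElem_cons_eraseIdx_perm hiw).symm.append_left _).trans perm_middle
  simpa [replicate_succ] using (hx.perm hperm).one_cons hypos

/-- if `(1^{n−d}, w) ∈ PAinv_n(y)` with all entries of `w` greater
than 1, then for every `i ∈ [d]` (0-based `i < d` below), the vector
`(1^{n−d+1}, w_{î})` is also in `PAinv_n(y)`. -/
theorem stmt10 (n d : ℕ) (hn : 0 < n) (hd1 : 1 ≤ d) (hdn : d ≤ n)
    (y : List ℕ) (hylen : y.length = n) (hypos : ∀ v ∈ y, 0 < v)
    (w : List ℕ) (hwlen : w.length = d) (hw : ∀ v ∈ w, 1 < v)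
    (hx : PAinv y (List.replicate (n - d) 1 ++ w)) :
    ∀ i < d, PAinv y (List.replicate (n - d + 1) 1 ++ w.eraseIdx i) :=
  stmt10_general n d y hypos w hwlen hx
end

section
/- Let y = (y_1, ..., y_n) be a vector of n positive integer car lengths and let y⁺ = (y_1, ..., y_n, y_{n+1}) be any extension of y by one additional positive integer. If χ(y) = α, then χ(y⁺) ∈ {α, α+1}. -/
open Finset

inductive ParkTo (m : ℕ) : Finset ℕ → List (ℕ × ℕ) → Finset ℕ → Prop
  | nil (occ : Finset ℕ) : ParkTo m occ [] occ
  | cons (occ : Finset ℕ) (pref len : ℕ) (rest : List (ℕ × ℕ)) (s : ℕ) (F : Finset ℕ) :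
      ParksAt occ m pref len s →
      ParkTo m (occ ∪ Ico s (s + len)) rest F →
      ParkTo m occ ((pref, len) :: rest) F

namespace ParksAt

variable {occ : Finset ℕ} {m p l s : ℕ}

theorem unique_s13 {s' : ℕ} (h : ParksAt occ m p l s) (h' : ParksAt occ m p l s') : s = s' := by
  rcases lt_trichotomy s s' with hlt | heq | hgt
  · exact absurd h.1 (h'.2 s hlt)
  · exact heq
  · exact absurd h'.1 (h.2 s' hgt)

theorem of_lot {m' : ℕ} (h : ParksAt occ m p l s) (hm' : s + l ≤ m' + 1) :
    ParksAt occ m' p l s :=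
  ⟨⟨h.1.1, hm', h.1.2.2⟩, fun s' hs' hf => h.2 s' hs' ⟨hf.1, by have := h.1.2.1; omega, hf.2.2⟩⟩

theorem of_pref_le_s13 {v : ℕ} (h : ParksAt occ m p l s) (hvp : v ≤ p)
    (hocc : ∀ t, v ≤ t → t < p → t ∈ occ) (hl : 0 < l) : ParksAt occ m v l s := by
  refine ⟨⟨hvp.trans h.1.1, h.1.2.1, h.1.2.2⟩, fun s' hs' hf => ?_⟩
  rcases lt_or_ge s' p with hsp | hsp
  · exact hf.2.2 s' (mem_Ico.mpr ⟨le_rfl, by omega⟩) (hocc s' hf.1 hsp)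
  · exact h.2 s' hs' ⟨hsp, hf.2.1, hf.2.2⟩

theorem union_Ico_subset_Icc_and_card (h : ParksAt occ m p l s) (hp : 1 ≤ p)
    (hocc : occ ⊆ Icc 1 m) :
    occ ∪ Ico s (s + l) ⊆ Icc 1 m ∧ (occ ∪ Ico s (s + l)).card = occ.card + l := by
  have hblock : Ico s (s + l) ⊆ Icc 1 m := fun t ht => by
    have := h.1.1; have := h.1.2.1
    simp only [mem_Ico, mem_Icc] at ht ⊢
    omega
  have hdisj : Disjoint occ (Ico s (s + l)) := disjoint_right.mpr h.1.2.2
  exact ⟨union_subset hocc hblock, by rw [card_union_of_disjoint hdisj, Nat.card_Ico]; omega⟩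

end ParksAt

theorem parksAt_succ_of_Icc {m p l k : ℕ} (hp1 : 1 ≤ p) (hp : p ≤ k + 1) (hl : 0 < l)
    (hm : k + l ≤ m) : ParksAt (Icc 1 k) m p l (k + 1) := by
  refine ⟨⟨hp, by omega, fun t ht htk => ?_⟩, fun s' hs' hf => hf.2.2 s' ?_ ?_⟩
  · simp only [mem_Ico, mem_Icc] at ht htk; omega
  · simp only [mem_Ico]; omega
  · have := hf.1; simp only [mem_Icc]; omega

theorem park_cons_iff {m : ℕ} {occ : Finset ℕ} {p l : ℕ} {rest : List (ℕ × ℕ)} :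
    Park m occ ((p, l) :: rest) ↔ ∃ s, ParksAt occ m p l s ∧ Park m (occ ∪ Ico s (s + l)) rest := by
  constructor
  · rintro (_ | ⟨_, _, _, _, s, hs, hrest⟩)
    exact ⟨s, hs, hrest⟩
  · rintro ⟨s, hs, hrest⟩
    exact .cons _ _ _ _ s hs hrest

theorem park_iff_exists_parkTo {m : ℕ} {occ : Finset ℕ} {l : List (ℕ × ℕ)} :
    Park m occ l ↔ ∃ F, ParkTo m occ l F := by
  constructor
  · intro h
    induction h with
    | nil occ => exact ⟨occ, .nil occ⟩
    | cons occ p len rest s hs _ ih =>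
      obtain ⟨F, hF⟩ := ih
      exact ⟨F, .cons occ p len rest s F hs hF⟩
  · rintro ⟨F, h⟩
    induction h with
    | nil occ => exact .nil occ
    | cons occ p len rest s F hs _ ih => exact .cons occ p len rest s hs ih

theorem park_append_singleton_iff {m : ℕ} {occ : Finset ℕ} {p l : ℕ} {a : List (ℕ × ℕ)} :
    Park m occ (a ++ [(p, l)]) ↔ ∃ G s, ParkTo m occ a G ∧ ParksAt G m p l s := by
  induction a generalizing occ with
  | nil =>
    simp only [List.nil_append, park_cons_iff]
    constructor
    · rintro ⟨s, hs, -⟩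
      exact ⟨occ, s, .nil occ, hs⟩
    · rintro ⟨G, s, ⟨⟩, hs⟩
      exact ⟨s, hs, .nil _⟩
  | cons hd a ih =>
    obtain ⟨p', l'⟩ := hd
    simp only [List.cons_append, park_cons_iff, ih]
    constructor
    · rintro ⟨s', hs', G, s, hG, hs⟩
      exact ⟨G, s, .cons _ _ _ _ s' G hs' hG, hs⟩
    · rintro ⟨G, s, ⟨⟩ | ⟨_, _, _, _, s', _, hs', hG⟩, hs⟩
      exact ⟨s', hs', G, s, hG, hs⟩

namespace ParkTo

variable {m : ℕ} {occ F : Finset ℕ} {l : List (ℕ × ℕ)}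

theorem subset (h : ParkTo m occ l F) : occ ⊆ F := by
  induction h with
  | nil occ => exact Subset.refl occ
  | cons occ p len rest s F hs _ ih => exact subset_union_left.trans ih

theorem of_lot {m' : ℕ} (h : ParkTo m occ l F) (hlen : ∀ pl ∈ l, 0 < pl.2)
    (hF : ∀ t ∈ F, t ≤ m') : ParkTo m' occ l F := by
  induction h with
  | nil occ => exact .nil occ
  | cons occ p len rest s F hs hrest ih =>
    have hlen0 : 0 < len := hlen _ List.mem_cons_self
    have hend : s + len - 1 ∈ F := hrest.subset (mem_union_right _ (by simp only [mem_Ico]; omega))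
    have := hF _ hend
    exact .cons occ p len rest s F (hs.of_lot (by omega))
      (ih (fun pl hpl => hlen pl (.tail _ hpl)) hF)

theorem subset_Icc_and_card (h : ParkTo m occ l F) (hocc : occ ⊆ Icc 1 m)
    (hpref : ∀ pl ∈ l, 1 ≤ pl.1) : F ⊆ Icc 1 m ∧ F.card = occ.card + (l.map Prod.snd).sum := by
  induction h with
  | nil occ => exact ⟨hocc, by simp⟩
  | cons occ p len rest s F hs _ ih =>
    obtain ⟨hsub, hcard⟩ := hs.union_Ico_subset_Icc_and_card (hpref _ List.mem_cons_self) hocc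
    obtain ⟨hF, hFcard⟩ := ih hsub (fun pl hpl => hpref pl (.tail _ hpl))
    refine ⟨hF, ?_⟩
    rw [hFcard, hcard, List.map_cons, List.sum_cons]
    omega

theorem eq_Icc (h : ParkTo m occ l F) (hocc : occ ⊆ Icc 1 m) (hpref : ∀ pl ∈ l, 1 ≤ pl.1)
    (hfill : occ.card + (l.map Prod.snd).sum = m) : F = Icc 1 m := by
  obtain ⟨hF, hFcard⟩ := h.subset_Icc_and_card hocc hpref
  exact eq_of_subset_of_card_le hF (by rw [Nat.card_Icc, hFcard, hfill]; omega)

theorem exists_pref_le (h : ParkTo m occ l F) {t : ℕ} (ht : t ∈ F) (hto : t ∉ occ) :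
    ∃ pl ∈ l, pl.1 ≤ t := by
  induction h with
  | nil occ => exact absurd ht hto
  | cons occ p len rest s F hs hrest ih =>
    by_cases hblock : t ∈ Ico s (s + len)
    · have := hs.1.1
      rw [mem_Ico] at hblock
      exact ⟨(p, len), List.mem_cons_self, by simp only; omega⟩
    · obtain ⟨pl, hpl, hle⟩ := ih ht (by simp [hto, hblock])
      exact ⟨pl, .tail _ hpl, hle⟩

theorem pref_le (h : ParkTo m occ l F) (hlen : ∀ pl ∈ l, 0 < pl.2) : ∀ pl ∈ l, pl.1 ≤ m := by
  induction h with
  | nil occ => simp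
  | cons occ p len rest s F hs _ ih =>
    intro pl hpl
    rcases List.mem_cons.mp hpl with rfl | hpl
    · have := hs.1.1; have := hs.1.2.1; have := hlen _ List.mem_cons_self
      simp only at *; omega
    · exact ih (fun q hq => hlen q (.tail _ hq)) pl hpl

/-- A car parking beyond the free spot `s` would have fitted at `s`. -/
theorem lt_of_notMem {s : ℕ} (h : ParkTo m occ l F) (hsF : s ∉ F) (hpref : ∀ pl ∈ l, pl.1 ≤ s)
    (hlen : ∀ pl ∈ l, 0 < pl.2) (hocc : ∀ t ∈ occ, t < s) : ∀ t ∈ F, t < s := by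
  induction h with
  | nil occ => exact hocc
  | cons occ p len rest s' F hs hrest ih =>
    have hp : p ≤ s := hpref _ List.mem_cons_self
    have hlen0 : 0 < len := hlen _ List.mem_cons_self
    have hblock : s' + len ≤ s := by
      by_contra! hlt
      rcases le_or_gt s' s with hs' | hs'
      · exact hsF (hrest.subset (mem_union_right _ (mem_Ico.mpr ⟨hs', hlt⟩)))
      · refine hs.2 s hs' ⟨hp, by have := hs.1.2.1; omega, fun t ht hto => ?_⟩
        have := hocc t hto
        rw [mem_Ico] at ht
        omega
    refine ih hsF (fun pl hpl => hpref pl (.tail _ hpl)) (fun pl hpl => hlen pl (.tail _ hpl))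
      fun t ht => ?_
    rcases mem_union.mp ht with ht | ht
    · exact hocc t ht
    · rw [mem_Ico] at ht; omega

end ParkTo

theorem Multiset.mem_erase_of_mem_erase {α : Type*} [DecidableEq α] {P : Multiset α} {a b : α}
    (ha : a ∈ P.erase b)
    (hb : b ∈ P) : b ∈ P.erase a := by
  by_cases hab : a = b
  · exact hab ▸ ha
  · exact (Multiset.mem_erase_of_ne (Ne.symm hab)).mpr hb

def ArrangementsPark (M : ℕ) (O : Finset ℕ) (P : Multiset ℕ) (L : List ℕ) : Prop :=
  ∀ u : List ℕ, (u : Multiset ℕ) = P → Park M O (u.zip L)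

namespace ArrangementsPark

variable {M : ℕ} {O : Finset ℕ} {P : Multiset ℕ} {L : List ℕ}

theorem cons {l q : ℕ} (h : ArrangementsPark M O P (l :: L)) (hq : q ∈ P) :
    ∃ s, ParksAt O M q l s ∧ ArrangementsPark M (O ∪ Ico s (s + l)) (P.erase q) L := by
  have hpark : ∀ a : List ℕ, (a : Multiset ℕ) = P.erase q → Park M O ((q, l) :: a.zip L) :=
    fun a ha => h (q :: a) (by rw [← Multiset.cons_coe, ha, Multiset.cons_erase hq])
  obtain ⟨s, hs, -⟩ := park_cons_iff.mp (hpark _ (P.erase q).coe_toList)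
  refine ⟨s, hs, fun a ha => ?_⟩
  obtain ⟨s', hs', hrest⟩ := park_cons_iff.mp (hpark a ha)
  rwa [hs'.unique_s13 hs] at hrest

/-- An arrangement of `P` fills the lot exactly, and every spot it fills lies above the
preference of the car filling it. -/
theorem mem_of_forall_lt (h : ArrangementsPark M O P L) (hO : O ⊆ Icc 1 M)
    (hfill : O.card + L.sum = M) (hcard : Multiset.card P = L.length) (hpos : ∀ p ∈ P, 1 ≤ p)
    {t : ℕ} (ht : t ∈ Icc 1 M) (hlt : ∀ p ∈ P, t < p) : t ∈ O := by
  have hlen : P.toList.length = L.length := by rw [Multiset.length_toList, hcard]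
  have hpref : ∀ pl ∈ P.toList.zip L, 1 ≤ pl.1 := fun pl hpl =>
    hpos _ (Multiset.mem_toList.mp (List.of_mem_zip hpl).1)
  obtain ⟨F, hF⟩ := park_iff_exists_parkTo.mp (h P.toList P.coe_toList)
  have hFeq := hF.eq_Icc hO hpref (by rw [List.map_snd_zip hlen.ge, hfill])
  by_contra htO
  obtain ⟨pl, hpl, hle⟩ := hF.exists_pref_le (hFeq ▸ ht) htO
  exact (hlt pl.1 (Multiset.mem_toList.mp (List.of_mem_zip hpl).1)).not_ge hle

theorem parksAt_of_le_min (h : ArrangementsPark M O P L) (hO : O ⊆ Icc 1 M)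
    (hfill : O.card + L.sum = M) (hcard : Multiset.card P = L.length) {mn v l r : ℕ}
    (hmin : ∀ p ∈ P, mn ≤ p) (hv : 1 ≤ v) (hvmn : v ≤ mn) (hl : 0 < l)
    (hr : ParksAt O M mn l r) : ParksAt O M v l r := by
  refine hr.of_pref_le_s13 hvmn (fun t hvt htmn => ?_) hl
  have := hr.1.1; have := hr.1.2.1
  exact h.mem_of_forall_lt hO hfill hcard (fun p hp => by have := hmin p hp; omega)
    (mem_Icc.mpr ⟨by omega, by omega⟩) (fun p hp => htmn.trans_le (hmin p hp))

/-- If the car preferring `v` comes first, it parks where a car preferring `min P` would; the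
rest is the same replacement with `min P` in place of `v`, one car later. -/
theorem cons_erase_of_le (hL : ∀ l ∈ L, 0 < l) (hO : O ⊆ Icc 1 M) (hfill : O.card + L.sum = M)
    (hcard : Multiset.card P = L.length) (h : ArrangementsPark M O P L) {w v : ℕ} (hw : w ∈ P)
    (hv : 1 ≤ v) (hvP : ∀ p ∈ P, v ≤ p) : ArrangementsPark M O (v ::ₘ P.erase w) L := by
  induction L generalizing O P w v with
  | nil => intro u _; simpa using Park.nil O
  | cons l L ih =>
    have hl : 0 < l := hL l List.mem_cons_self
    have hpos : ∀ p ∈ P, 1 ≤ p := fun p hp => hv.trans (hvP p hp)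
    have step : ∀ {q s}, q ∈ P → ParksAt O M q l s →
        ArrangementsPark M (O ∪ Ico s (s + l)) (P.erase q) L →
        ∀ {w' v'}, w' ∈ P.erase q → 1 ≤ v' → (∀ p ∈ P.erase q, v' ≤ p) →
        ArrangementsPark M (O ∪ Ico s (s + l)) (v' ::ₘ (P.erase q).erase w') L := by
      intro q s hq hs hrest w' v' hw' hv' hvP'
      obtain ⟨hsub, hcard'⟩ := hs.union_Ico_subset_Icc_and_card (hpos q hq) hO
      refine ih (fun l' hl' => hL l' (.tail _ hl')) hsub ?_ ?_ hrest hw' hv' hvP'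
      · rw [hcard']; simp only [List.sum_cons] at hfill; omega
      · rw [Multiset.card_erase_of_mem hq, hcard]; rfl
    rintro (_ | ⟨q, u⟩) hu
    · exact Park.nil O
    have hu' : (u : Multiset ℕ) = (v ::ₘ P.erase w).erase q := by
      rw [← hu, ← Multiset.cons_coe, Multiset.erase_cons_head]
    by_cases hq : q ∈ P.erase w
    · have hqP := Multiset.mem_of_mem_erase hq
      obtain ⟨s, hs, hrest⟩ := h.cons hqP
      refine Park.cons _ _ _ _ s hs (step hqP hs hrest (Multiset.mem_erase_of_mem_erase hq hw) hv
        (fun p hp => hvP p (Multiset.mem_of_mem_erase hp)) u ?_)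
      rw [hu', Multiset.erase_cons_tail_of_mem hq, Multiset.erase_comm]
    obtain rfl : q = v := by
      have : q ∈ v ::ₘ P.erase w := by rw [← hu]; simp
      exact (Multiset.mem_cons.mp this).resolve_right hq
    rw [Multiset.erase_cons_head] at hu'
    obtain ⟨mn, hmn, hmin⟩ := Multiset.exists_min_image id
      (Multiset.card_pos.mp (Multiset.card_pos_iff_exists_mem.mpr ⟨w, hw⟩))
    obtain ⟨r, hr, hrest⟩ := h.cons hmn
    refine Park.cons _ _ _ _ r (h.parksAt_of_le_min hO hfill hcard hmin hv (hvP mn hmn) hl hr) ?_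
    by_cases hwm : w = mn
    · exact hrest u (hwm ▸ hu')
    have hmnw : mn ∈ P.erase w := (Multiset.mem_erase_of_ne (Ne.symm hwm)).mpr hmn
    refine step hmn hr hrest ((Multiset.mem_erase_of_ne hwm).mpr hw) (hpos mn hmn)
      (fun p hp => hmin p (Multiset.mem_of_mem_erase hp)) u ?_
    rw [hu', Multiset.erase_comm, Multiset.cons_erase hmnw]

end ArrangementsPark

namespace PAinv

variable {y x : List ℕ} {c : ℕ}

theorem arrangementsPark (h : PAinv y x) : ArrangementsPark y.sum ∅ x y :=
  fun u hu => (h u (Multiset.coe_eq_coe.mp hu.symm)).2.2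

theorem append_one (hypos : ∀ v ∈ y, 0 < v) (hc : 0 < c) (hx : PAinv y x) :
    PAinv (y ++ [c]) (x ++ [1]) := by
  obtain ⟨hlen, hbounds, -⟩ := hx x (.refl x)
  intro x' hperm
  obtain ⟨u, q, rfl⟩ : ∃ u q, x' = u ++ [q] :=
    x'.eq_nil_or_concat'.resolve_left fun h => by simpa [h] using hperm.length_eq
  have hmem : ∀ v ∈ u ++ [q], v = 1 ∨ v ∈ x := fun v hv => by
    simpa [or_comm] using hperm.symm.subset hv
  have hmul : (u : Multiset ℕ) = (1 ::ₘ x).erase q := by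
    have : q ::ₘ (u : Multiset ℕ) = 1 ::ₘ x := by
      rw [Multiset.cons_coe, Multiset.cons_coe, Multiset.coe_eq_coe]
      exact (List.perm_append_singleton q u).symm.trans
        (hperm.symm.trans (List.perm_append_singleton 1 x))
    rw [← this, Multiset.erase_cons_head]
  have hulen : u.length = y.length := by simpa [hlen] using hperm.length_eq.symm
  set m := y.sum
  have hu : Park m ∅ (u.zip y) := by
    by_cases hq1 : q = 1
    · rw [hq1, Multiset.erase_cons_head] at hmul
      exact (hx u (Multiset.coe_eq_coe.mp hmul.symm)).2.2
    have hqx : q ∈ x := (hmem q (by simp)).resolve_left hq1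
    rw [Multiset.erase_cons_tail_of_mem (Multiset.mem_coe.mpr hqx)] at hmul
    exact hx.arrangementsPark.cons_erase_of_le hypos (by simp) (by simp) (by simp [hlen])
      (Multiset.mem_coe.mpr hqx) le_rfl (fun p hp => (hbounds p (Multiset.mem_coe.mp hp)).1) u hmul
  have hbound : ∀ v ∈ u ++ [q], 1 ≤ v ∧ v ≤ m + 1 := fun v hv => by
    rcases hmem v hv with rfl | hvx
    · omega
    · have := hbounds v hvx; omega
  obtain ⟨F, hF⟩ := park_iff_exists_parkTo.mp hu
  have hFeq : F = Icc 1 m := hF.eq_Icc (by simp)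
    (fun pl hpl => (hbound pl.1 (List.mem_append_left _ (List.of_mem_zip hpl).1)).1)
    (by simp [List.map_snd_zip hulen.ge, m])
  obtain ⟨hq1, hqm⟩ := hbound q (by simp)
  refine ⟨by simp [hulen], fun v hv => ?_, ?_⟩
  · have := hbound v hv; simp only [List.sum_append, List.sum_singleton]; omega
  rw [List.sum_append, List.sum_singleton, List.zip_append hulen]
  refine park_append_singleton_iff.mpr ⟨F, m + 1,
    hF.of_lot (fun pl hpl => hypos _ (List.of_mem_zip hpl).2) (fun t ht => ?_),
    hFeq ▸ parksAt_succ_of_Icc hq1 hqm hc le_rfl⟩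
  rw [hFeq, mem_Icc] at ht
  omega

theorem erase_of_forall_le {w : ℕ} (hypos : ∀ v ∈ y, 0 < v) (hc : 0 < c)
    (hx : PAinv (y ++ [c]) x) (hw : w ∈ x) (hwmax : ∀ v ∈ x, v ≤ w) : PAinv y (x.erase w) := by
  obtain ⟨hlen, hbounds, -⟩ := hx x (.refl x)
  intro u hu
  have hperm : x.Perm (u ++ [w]) :=
    (List.perm_cons_erase hw).trans ((hu.cons w).trans (List.perm_append_singleton w u).symm)
  have hmem : ∀ v ∈ u, v ∈ x := fun v hv => hperm.symm.subset (List.mem_append_left _ hv)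
  have hulen : u.length = y.length := by
    have := hperm.length_eq
    simp only [List.length_append, List.length_singleton] at hlen this
    omega
  obtain ⟨-, -, hpark⟩ := hx _ hperm
  rw [List.sum_append, List.sum_singleton, List.zip_append hulen] at hpark
  obtain ⟨G, s, hG, hs⟩ := park_append_singleton_iff.mp hpark
  set m := y.sum
  have hlens : ∀ pl ∈ u.zip y, 0 < pl.2 := fun pl hpl => hypos _ (List.of_mem_zip hpl).2
  have hprefs : ∀ pl ∈ u.zip y, 1 ≤ pl.1 ∧ pl.1 ≤ s := fun pl hpl =>
    have hv := hmem _ (List.of_mem_zip hpl).1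
    ⟨(hbounds _ hv).1, (hwmax _ hv).trans hs.1.1⟩
  obtain ⟨hGsub, hGcard⟩ := hG.subset_Icc_and_card (by simp) (fun pl hpl => (hprefs pl hpl).1)
  rw [List.map_snd_zip hulen.ge, card_empty, zero_add] at hGcard
  have hsG : s ∉ G := fun hsG => hs.1.2.2 s (mem_Ico.mpr ⟨le_rfl, by omega⟩) hsG
  have hGs := hG.lt_of_notMem hsG (fun pl hpl => (hprefs pl hpl).2) hlens (by simp)
  have hGm : ∀ t ∈ G, t ≤ m := by
    have hsub : G ⊆ Ico 1 s := fun t ht => mem_Ico.mpr ⟨(mem_Icc.mp (hGsub ht)).1, hGs t ht⟩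
    have := card_le_card hsub
    have := hs.1.2.1
    rw [Nat.card_Ico, hGcard] at *
    intro t ht
    have := hGs t ht
    omega
  have hG' := hG.of_lot hlens hGm
  refine ⟨hulen, fun v hv => ⟨(hbounds v (hmem v hv)).1, ?_⟩, park_iff_exists_parkTo.mpr ⟨G, hG'⟩⟩
  rw [← List.map_fst_zip hulen.le] at hv
  obtain ⟨pl, hpl, rfl⟩ := List.mem_map.mp hv
  exact hG'.pref_le hlens pl hpl

end PAinv

theorem PAinv_replicate_one {y : List ℕ} (hypos : ∀ v ∈ y, 0 < v) :
    PAinv y (List.replicate y.length 1) := by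
  induction y using List.reverseRecOn with
  | nil =>
    intro x' hx'
    obtain rfl := List.nil_perm.mp hx'
    exact ⟨rfl, by simp, .nil _⟩
  | append_singleton y c ih =>
    rw [List.length_append, List.length_singleton, List.replicate_succ']
    exact (ih fun v hv => hypos v (by simp [hv])).append_one
      (fun v hv => hypos v (by simp [hv])) (hypos c (by simp))

theorem deg_append_one (x : List ℕ) : deg (x ++ [1]) = deg x := by
  simp [deg, List.filter_append]

theorem deg_eq_deg_erase_add_one {x : List ℕ} {w : ℕ} (hw : w ∈ x) (hw1 : w ≠ 1) :
    deg x = deg (x.erase w) + 1 := by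
  rw [deg, ((List.perm_cons_erase hw).filter _).length_eq]
  simp [deg, hw1]

theorem bddAbove_degs (y : List ℕ) : BddAbove {d | ∃ x, PAinv y x ∧ deg x = d} :=
  ⟨y.length, by
    rintro _ ⟨x, hx, rfl⟩
    exact (List.length_filter_le _ _).trans (hx x (.refl x)).1.le⟩

theorem deg_le_chi {y x : List ℕ} (hx : PAinv y x) : deg x ≤ chi y :=
  le_csSup (bddAbove_degs y) ⟨x, hx, rfl⟩

theorem exists_deg_eq_chi {y : List ℕ} (hypos : ∀ v ∈ y, 0 < v) :
    ∃ x, PAinv y x ∧ deg x = chi y :=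
  Nat.sSup_mem (s := {d | ∃ x, PAinv y x ∧ deg x = d}) ⟨_, _, PAinv_replicate_one hypos, rfl⟩
    (bddAbove_degs y)

theorem chi_le_chi_append {y : List ℕ} {c : ℕ} (hypos : ∀ v ∈ y, 0 < v) (hc : 0 < c) :
    chi y ≤ chi (y ++ [c]) := by
  obtain ⟨x, hx, hdeg⟩ := exists_deg_eq_chi hypos
  calc chi y = deg (x ++ [1]) := by rw [deg_append_one, hdeg]
    _ ≤ chi (y ++ [c]) := deg_le_chi (hx.append_one hypos hc)

theorem chi_append_le {y : List ℕ} {c : ℕ} (hypos : ∀ v ∈ y, 0 < v) (hc : 0 < c) :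
    chi (y ++ [c]) ≤ chi y + 1 := by
  refine csSup_le' ?_
  rintro _ ⟨x, hx, rfl⟩
  by_cases hall : ∀ v ∈ x, v = 1
  · have : deg x = 0 := by simpa [deg, List.filter_eq_nil_iff] using hall
    omega
  obtain ⟨v, hvx, hv1⟩ : ∃ v ∈ x, v ≠ 1 := by simpa using hall
  obtain ⟨w, hwx, hwmax⟩ := x.toFinset.exists_max_image id ⟨v, List.mem_toFinset.mpr hvx⟩
  simp only [List.mem_toFinset, id] at hwx hwmax
  have hw1 : w ≠ 1 := by
    have := (hx x (.refl x)).2.1 v hvx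
    have := hwmax v hvx
    omega
  rw [deg_eq_deg_erase_add_one hwx hw1]
  exact Nat.add_le_add_right (deg_le_chi (hx.erase_of_forall_le hypos hc hwx hwmax)) 1

theorem stmt13_general (y : List ℕ) (hypos : ∀ v ∈ y, 0 < v) (c : ℕ) (hc : 0 < c) (α : ℕ)
    (hchi : chi y = α) :
    chi (y ++ [c]) = α ∨ chi (y ++ [c]) = α + 1 := by
  have := chi_le_chi_append hypos hc
  have := chi_append_le hypos hc
  omega

/-- if `χ(y) = α` then `χ(y⁺) ∈ {α, α + 1}` for `y⁺ = (y, c)`. -/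
theorem stmt13 (n : ℕ) (hn : 0 < n) (y : List ℕ) (hylen : y.length = n)
    (hypos : ∀ v ∈ y, 0 < v) (c : ℕ) (hc : 0 < c) (α : ℕ) (hchi : chi y = α) :
    chi (y ++ [c]) = α ∨ chi (y ++ [c]) = α + 1 :=
  stmt13_general y hypos c hc α hchi
end

section
/- Let y = (y_1, ..., y_n) be a vector of n positive integer car lengths and let x = (x_1, ..., x_n) ∈ PA_n(y). If there exists i ∈ [n] such that x_i = min(x_i, x_{i+1}, ..., x_n), then for any r with 1 ≤ r ≤ x_i, the vector (x_1, ..., x_{i−1}, r, x_{i+1}, ..., x_n) obtained by replacing the i-th entry of x with r is also in PA_n(y). In particular, replacing the last entry of any parking assortment by 1 yields a parking assortment. -/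
/-!
Lowering the preference of car `i` to `r ≤ x_i` could only change the outcome if car `i`
now fits at some spot `s' < x_i` that is free when it arrives. Since the total length of the
cars equals the number of spots, a successful parking fills the whole lot; the cars after `i`
all prefer spots `≥ x_i`, so they never occupy `s'`, and some car before `i` must already have
taken it. Hence car `i` parks where it did before, and the rest of the process is unchanged.
-/

open Finset

lemma FitsAt.union_Ico_subset {occ : Finset ℕ} {m pref len s : ℕ}
    (h : FitsAt occ m pref len s) (hpref : 1 ≤ pref) (hocc : occ ⊆ Icc 1 m) :
    occ ∪ Ico s (s + len) ⊆ Icc 1 m := by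
  obtain ⟨hs, hm, -⟩ := h
  refine union_subset hocc fun t ht => ?_
  simp only [mem_Ico, mem_Icc] at ht ⊢
  omega

lemma FitsAt.card_union_Ico {occ : Finset ℕ} {m pref len s : ℕ}
    (h : FitsAt occ m pref len s) : (occ ∪ Ico s (s + len)).card = occ.card + len := by
  rw [card_union_of_disjoint (disjoint_right.mpr h.2.2), Nat.card_Ico, Nat.add_sub_cancel_left]

namespace Park

/-- `hocc` and `hcard` say that the cars of `L` fill exactly the free spots of the lot. -/
theorem mem_of_lt_prefs_s14 {m p t : ℕ} {occ : Finset ℕ} {L : List (ℕ × ℕ)}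
    (hp : Park m occ L) (hocc : occ ⊆ Icc 1 m) (hcard : occ.card + (L.map Prod.snd).sum = m)
    (hL : ∀ pr ∈ L, p ≤ pr.1) (ht : t ∈ Icc 1 m) (htp : t < p) : t ∈ occ := by
  induction hp with
  | nil occ =>
    have hfull : occ = Icc 1 m :=
      eq_of_subset_of_card_le hocc (by simp only [List.map_nil, List.sum_nil] at hcard; simp; omega)
    exact hfull ▸ ht
  | cons occ pref len rest s hs _ ih =>
    have hpref : p ≤ pref := hL _ List.mem_cons_self
    have ht1 : 1 ≤ t := (mem_Icc.mp ht).1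
    have hmem := ih (hs.1.union_Ico_subset (by omega) hocc)
      (by rw [hs.1.card_union_Ico]; simp only [List.map_cons, List.sum_cons] at hcard; omega)
      fun pr hpr => hL pr (List.mem_cons_of_mem _ hpr)
    have hs' : pref ≤ s := hs.1.1
    exact (mem_union.mp hmem).resolve_right (by simp only [mem_Ico]; omega)

theorem cons_of_pref_le {m u l r : ℕ} {occ : Finset ℕ} {rest : List (ℕ × ℕ)}
    (hp : Park m occ ((u, l) :: rest)) (hocc : occ ⊆ Icc 1 m)
    (hcard : occ.card + (((u, l) :: rest).map Prod.snd).sum = m)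
    (hrest : ∀ pr ∈ rest, u ≤ pr.1) (hr : 1 ≤ r) (hru : r ≤ u) :
    Park m occ ((r, l) :: rest) := by
  have hfull := hp
  cases hp with | cons _ _ _ _ s hs hpark => ?_
  obtain ⟨⟨hus, hsm, hfree⟩, hleast⟩ := hs
  rcases Nat.eq_zero_or_pos l with rfl | hl
  -- a car of length zero fits anywhere, but also occupies nothing
  · refine cons _ _ _ _ r ⟨⟨le_rfl, by omega, by simp⟩, fun s' hs' h => by have := h.1; omega⟩ ?_
    simpa using hpark
  · refine cons _ _ _ _ s ⟨⟨hru.trans hus, hsm, hfree⟩, fun s' hs' ⟨hrs', hs'm, hfree'⟩ => ?_⟩ hpark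
    by_cases hus' : u ≤ s'
    · exact hleast s' hs' ⟨hus', hs'm, hfree'⟩
    · exact hfree' s' (by simp only [mem_Ico]; omega)
        (hfull.mem_of_lt_prefs_s14 hocc hcard (List.forall_mem_cons.mpr ⟨le_rfl, hrest⟩)
          (by simp only [mem_Icc]; omega) (by omega))

theorem set_of_le_prefs {m : ℕ} {occ : Finset ℕ} {L : List (ℕ × ℕ)} {i r : ℕ}
    (hp : Park m occ L) (hL : ∀ pr ∈ L, 1 ≤ pr.1) (hocc : occ ⊆ Icc 1 m)
    (hcard : occ.card + (L.map Prod.snd).sum = m) (hi : i < L.length)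
    (hmin : ∀ j (hj : j < L.length), i ≤ j → L[i].1 ≤ L[j].1) (hr : 1 ≤ r) (hri : r ≤ L[i].1) :
    Park m occ (L.set i (r, L[i].2)) := by
  induction hp generalizing i with
  | nil occ => simp at hi
  | cons occ pref len rest s hs hpark ih =>
    cases i with
    | zero =>
      refine (cons occ pref len rest s hs hpark).cons_of_pref_le hocc hcard
        (fun pr hpr => ?_) hr hri
      obtain ⟨j, hj, rfl⟩ := List.mem_iff_getElem.mp hpr
      exact hmin (j + 1) (by simpa using hj) (Nat.zero_le _)
    | succ i =>
      have hrest := ih (i := i) (fun pr hpr => hL pr (List.mem_cons_of_mem _ hpr))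
        (hs.1.union_Ico_subset (hL _ List.mem_cons_self) hocc)
        (by rw [hs.1.card_union_Ico]; simp only [List.map_cons, List.sum_cons] at hcard; omega)
        (by simpa using hi) (fun j hj hij => hmin (j + 1) (by simpa using hj) (by omega)) hri
      exact cons _ _ _ _ s hs hrest

end Park

lemma List.zip_set_left {α β : Type*} (l : List α) (l' : List β) (i : ℕ) (a : α)
    (hi : i < l'.length) : (l.set i a).zip l' = (l.zip l').set i (a, l'[i]) := by
  refine List.ext_getElem (by simp) fun j h₁ h₂ => ?_
  simp only [List.getElem_zip, List.getElem_set]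
  split_ifs with h <;> simp_all

theorem PA.set_of_le_min {y x : List ℕ} {i r : ℕ} (hx : PA y x) (hi : i < x.length)
    (hmin : ∀ j, i ≤ j → j < x.length → x.getD i 0 ≤ x.getD j 0)
    (hr : 1 ≤ r) (hri : r ≤ x.getD i 0) : PA y (x.set i r) := by
  obtain ⟨hlen, hbd, hpark⟩ := hx
  have hiy : i < y.length := hlen ▸ hi
  have hxi : x.getD i 0 = x[i] := List.getD_eq_getElem _ _ hi
  have hmin' : ∀ j (hj : j < x.length), i ≤ j → x[i] ≤ x[j] := fun j hj hij => by
    simpa only [hxi, List.getD_eq_getElem _ _ hj] using hmin j hij hj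
  rw [hxi] at hri
  refine ⟨by rw [List.length_set, hlen], fun v hv => ?_, ?_⟩
  · rcases List.mem_or_eq_of_mem_set hv with hv | rfl
    · exact hbd v hv
    · exact ⟨hr, hri.trans (hbd _ (List.getElem_mem hi)).2⟩
  · rw [List.zip_set_left x y i r hiy]
    have := hpark.set_of_le_prefs (i := i) (r := r)
      (fun pr hpr => (hbd _ (List.of_mem_zip hpr).1).1) (empty_subset _)
      (by rw [List.map_snd_zip hlen.ge, card_empty, zero_add]) (by simp [hi, hiy])
      (fun j hj hij => by
        simpa only [List.getElem_zip] using hmin' j (by simp at hj; omega) hij) hr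
      (by simpa only [List.getElem_zip] using hri)
    simpa only [List.getElem_zip] using this

theorem stmt14_general (n : ℕ) (y : List ℕ) (hylen : y.length = n)
    (x : List ℕ) (hx : PA y x)
    (i : ℕ) (hi : i < n)
    (hmin : ∀ j, i ≤ j → j < n → x.getD i 0 ≤ x.getD j 0) :
    (∀ r, 1 ≤ r → r ≤ x.getD i 0 → PA y (x.set i r)) ∧
      PA y (x.set (n - 1) 1) := by
  have hxn : x.length = n := hx.1.trans hylen
  refine ⟨fun r hr hri => hx.set_of_le_min (hxn ▸ hi) (fun j hij hj => hmin j hij (hxn ▸ hj)) hr hri,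
    hx.set_of_le_min (by omega) (fun j hij hj => by rw [show j = n - 1 by omega]) le_rfl ?_⟩
  rw [List.getD_eq_getElem _ _ (by omega)]
  exact (hx.2.1 _ (List.getElem_mem _)).1

/-- if `x ∈ PA_n(y)` and `x_i = min(x_i, …, x_n)` (0-based `i` below),
then replacing the `i`-th entry of `x` by any `r` with `1 ≤ r ≤ x_i` again yields a
parking assortment; in particular replacing the last entry by 1 does. -/
theorem stmt14 (n : ℕ) (hn : 0 < n) (y : List ℕ) (hylen : y.length = n)
    (hypos : ∀ v ∈ y, 0 < v) (x : List ℕ) (hx : PA y x)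
    (i : ℕ) (hi : i < n)
    (hmin : ∀ j, i ≤ j → j < n → x.getD i 0 ≤ x.getD j 0) :
    (∀ r, 1 ≤ r → r ≤ x.getD i 0 → PA y (x.set i r)) ∧
      PA y (x.set (n - 1) 1) :=
  stmt14_general n y hylen x hx i hi hmin
end

section
/- Let y = (y_1, ..., y_n) be a vector of n positive integer car lengths that is not constant (not all entries equal). If w ∈ W(y), then w ≤ y_1 + y_2 + ... + y_{n−1}. -/
/-!
When the first `n - 1` cars all prefer spot `1` they fill spots `1, …, S`, where
`S = y₁ + ⋯ + y_{n-1}`, so the last car can only park if `w ≤ S + 1`. If `w = S + 1`, move `w`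
to a car whose length `e` differs from `yₙ`. That car must take spots `S + 1, …, S + e`
(so `e < yₙ`), the cars after it fill the lot up to spot `S - e`, and the last car, which
prefers spot `1`, finds only free runs of lengths `e` and `yₙ - e`.
-/

open Finset

lemma zip_replicate_length_left {α β : Type*} (a : α) (l : List β) :
    (List.replicate l.length a).zip l = l.map (Prod.mk a) := by
  induction l with
  | nil => rfl
  | cons b l ih => simp [List.replicate_succ, ih]

lemma FitsAt.pref_add_len_le {occ : Finset ℕ} {m pref len s : ℕ}
    (h : FitsAt occ m pref len s) : pref + len ≤ m + 1 := by
  obtain ⟨hs, hm, -⟩ := h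
  omega

lemma ParksAt.le_of_fitsAt {occ : Finset ℕ} {m pref len s s' : ℕ}
    (h : ParksAt occ m pref len s) (h' : FitsAt occ m pref len s') : s ≤ s' :=
  not_lt.mp fun hlt => h.2 s' hlt h'

lemma ParksAt.eq_of_Ico_subset {occ : Finset ℕ} {m p len s b : ℕ}
    (h : ParksAt occ m p len s) (hlen : 0 < len) (hpb : p ≤ b) (hfull : Ico p b ⊆ occ)
    (hfree : Disjoint occ (Ico b (b + len))) : s = b := by
  obtain ⟨hps, hsm, hs_free⟩ := h.1
  have hbs : b ≤ s := by
    by_contra! hsb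
    exact hs_free s (by simp [hlen]) (hfull (by simp [hps, hsb]))
  have hfits : FitsAt occ m p len b :=
    ⟨hpb, by omega, fun t ht => disjoint_right.mp hfree ht⟩
  exact le_antisymm (h.le_of_fitsAt hfits) hbs

theorem Park.of_map_append {m p : ℕ} {rest : List (ℕ × ℕ)} :
    ∀ {l : List ℕ} {b : ℕ} {occ : Finset ℕ}, (∀ v ∈ l, 0 < v) → p ≤ b → Ico p b ⊆ occ →
      Disjoint occ (Ico b (b + l.sum)) → Park m occ (l.map (Prod.mk p) ++ rest) →
      Park m (occ ∪ Ico b (b + l.sum)) rest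
  | [], _, _, _, _, _, _, h => by simpa using h
  | v :: l, b, occ, hpos, hpb, hfull, hfree, h => by
    rcases h with _ | ⟨_, _, _, _, s, hs, h⟩
    have hv : 0 < v := hpos v List.mem_cons_self
    have hsum : (v :: l).sum = v + l.sum := List.sum_cons
    have hIco : Ico b (b + v) ∪ Ico (b + v) (b + v + l.sum) = Ico b (b + (v :: l).sum) := by
      rw [hsum, ← add_assoc]; exact Ico_union_Ico_eq_Ico (by omega) (by omega)
    obtain rfl : b = s := (hs.eq_of_Ico_subset hv hpb hfull
      (hfree.mono_right (Ico_subset_Ico_right (by omega)))).symm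
    have := Park.of_map_append (b := b + v) (fun w hw => hpos w (List.mem_cons_of_mem v hw))
      (by omega) (by
        rw [← Ico_union_Ico_eq_Ico hpb (Nat.le_add_right b v)]
        exact union_subset_union hfull subset_rfl)
      (disjoint_union_left.mpr ⟨hfree.mono_right (by rw [← hIco]; exact subset_union_right),
        Ico_disjoint_Ico_consecutive _ _ _⟩) h
    rwa [union_assoc, hIco] at this

lemma Park.pref_add_len_le {m w len : ℕ} {l : List ℕ} (hl : ∀ v ∈ l, 0 < v)
    (h : Park m ∅ (l.map (Prod.mk 1) ++ [(w, len)])) : w + len ≤ m + 1 := by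
  rcases Park.of_map_append hl le_rfl (by simp) (disjoint_empty_left _) h with
    _ | ⟨_, _, _, _, s, hs, -⟩
  exact hs.1.pref_add_len_le

lemma not_park_of_len_ne {A B : List ℕ} {e len : ℕ} (hA : ∀ v ∈ A, 0 < v) (hB : ∀ v ∈ B, 0 < v)
    (he : 0 < e) (hne : e ≠ len) :
    ¬ Park (A.sum + e + B.sum + len) ∅
      (A.map (Prod.mk 1) ++ (A.sum + e + B.sum + 1, e) :: (B.map (Prod.mk 1) ++ [(1, len)])) := by
  intro h
  set S := A.sum + e + B.sum
  rcases Park.of_map_append hA le_rfl (by simp) (disjoint_empty_left _) h with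
    _ | ⟨_, _, _, _, s, hs, h⟩
  obtain rfl : S + 1 = s := (hs.eq_of_Ico_subset he le_rfl (by simp)
    (by simp [disjoint_left]; omega)).symm
  have hlen : e < len := by have := hs.1.pref_add_len_le; omega
  rcases Park.of_map_append hB (b := 1 + A.sum) (by omega) (by simp [subset_iff]; omega)
    (by simp [disjoint_left]; omega) h with _ | ⟨_, _, _, _, s', ⟨⟨hs'1, hs'm, hs'free⟩, -⟩, -⟩
  have hs' : 1 + A.sum + B.sum ≤ s' := by
    by_contra! hlt
    exact hs'free s' (by simp; omega) (by simp; omega)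
  exact hs'free (S + 1) (by simp; omega) (by simp [he])

lemma PA.le_sum_add_one {L : List ℕ} {len w : ℕ} (hL : ∀ v ∈ L, 0 < v)
    (h : PA (L ++ [len]) (List.replicate L.length 1 ++ [w])) : w ≤ L.sum + 1 := by
  have hpark := h.2.2
  rw [List.zip_append (by simp), zip_replicate_length_left] at hpark
  have := hpark.pref_add_len_le hL
  simp only [List.sum_append, List.sum_singleton] at this
  omega

lemma not_PA_of_len_ne {A B : List ℕ} {e len : ℕ} (hA : ∀ v ∈ A, 0 < v) (hB : ∀ v ∈ B, 0 < v)
    (he : 0 < e) (hne : e ≠ len) :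
    ¬ PA (A ++ e :: (B ++ [len]))
      (List.replicate A.length 1 ++ (A.sum + e + B.sum + 1) ::
        List.replicate (B ++ [len]).length 1) := by
  rintro ⟨-, -, h⟩
  rw [List.zip_append (by simp), List.zip_cons_cons, zip_replicate_length_left,
    zip_replicate_length_left, List.map_append, List.map_singleton] at h
  refine not_park_of_len_ne hA hB he hne ?_
  convert h using 1
  simp only [List.sum_append, List.sum_cons, List.sum_nil]
  omega

theorem stmt15_general (y : List ℕ)
    (hypos : ∀ v ∈ y, 0 < v) (hnc : ∃ u ∈ y, ∃ v ∈ y, u ≠ v) :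
    ∀ w ∈ Wset y, w ≤ y.dropLast.sum := by
  intro w hw
  obtain ⟨L, len, rfl⟩ : ∃ L len, y = L ++ [len] := by
    simpa using (List.eq_nil_or_concat y).resolve_left (by rintro rfl; simp at hnc)
  obtain ⟨e, he, hne⟩ : ∃ e ∈ L, e ≠ len := by
    by_contra! hall
    obtain ⟨u, hu, v, hv, huv⟩ := hnc
    simp only [List.mem_append, List.mem_singleton] at hu hv
    exact huv ((hu.elim (hall u) id).trans (hv.elim (hall v) id).symm)
  have hw : PAinv (L ++ [len]) (List.replicate L.length 1 ++ [w]) := by simpa [Wset] using hw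
  have hwle := PA.le_sum_add_one (fun v hv => hypos v (by simp [hv])) (hw _ (List.Perm.refl _))
  rw [List.dropLast_concat]
  refine Nat.le_of_lt_succ (lt_of_le_of_ne hwle fun hwS => ?_)
  obtain ⟨A, B, rfl⟩ := List.append_of_mem he
  obtain rfl : w = A.sum + e + B.sum + 1 := by
    simp only [List.sum_append, List.sum_cons] at hwS; omega
  rw [List.append_assoc, List.cons_append] at hw hypos
  refine not_PA_of_len_ne (A := A) (B := B) (fun v hv => hypos v (by simp [hv]))
    (fun v hv => hypos v (by simp [hv])) (hypos e (by simp)) hne (hw _ ?_)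
  rw [List.length_append, show (e :: B).length = (B ++ [len]).length by simp, List.replicate_add,
    List.append_assoc]
  exact (List.perm_append_singleton _ _).append_left _

/-- if `y` is not constant and `w ∈ W(y)`, then
`w ≤ y₁ + y₂ + ⋯ + y_{n−1}`. -/
theorem stmt15 (n : ℕ) (hn : 0 < n) (y : List ℕ) (hylen : y.length = n)
    (hypos : ∀ v ∈ y, 0 < v) (hnc : ∃ u ∈ y, ∃ v ∈ y, u ≠ v) :
    ∀ w ∈ Wset y, w ≤ y.dropLast.sum :=
  stmt15_general y hypos hnc
end

section
/- Let y = (y_1, ..., y_n) be a vector of n positive integer car lengths. If |W(y)| = 2^{n−1}, then y_1 ≥ y_2 and y_j > Σ_{i=j+1}^{n} y_i for every j ∈ [n−1] with j ≥ 2. -/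
/-!
Put the car of length `y₀` first, preferring `w`, and let every other car prefer spot `1`.
The first car occupies `[w, w + y₀)`; each later car parks in the gap `[1, w)` if it still fits
there and behind the first car otherwise. Since the lot is exactly filled, the cars in the gap
have total length `w - 1`, so every `w ∈ W(y)` is `1 + ∑_{i ∈ S} yᵢ` for some `S ⊆ {1, …, n-1}`.
Hence `|W(y)| = 2^{n-1}` forces `W(y)` to be the set of all these values, attained injectively.
For `S = {1, …, n-1}`, the vector in which the second car prefers `w = 1 + ∑_{i ≥ 1} yᵢ` must
still let that car park, which forces `w + y₁ ≤ y₀ + ∑_{i ≥ 1} yᵢ + 1`, i.e. `y₁ ≤ y₀`.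
If `y_j ≤ ∑_{i > j} yᵢ`, take `S = {j+1, …, n-1}`: in the run for `w = 1 + ∑_{i ∈ S} yᵢ`
some car of index at most `j` fits into the empty gap, so the gap set differs from `S`, although
it has the same sum.
-/

open Finset

theorem ParksAt.eq_of_forall_lt {occ : Finset ℕ} {m pref len s t : ℕ}
    (hs : ParksAt occ m pref len s) (hbelow : ∀ s' < t, ¬ FitsAt occ m pref len s')
    (hpref : pref ≤ t) (hfree : ∀ u ∈ Ico t (t + len), u ∉ occ) : s = t := by
  have hts : t ≤ s := not_lt.1 fun h => hbelow s h hs.1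
  refine le_antisymm (not_lt.1 fun h => hs.2 t h ⟨hpref, ?_, hfree⟩) hts
  have := hs.1.2.1
  omega

/-- The cars `k ∈ L` (of lengths `len k`) that park in the gap `[p, w)` when they all prefer
spot `1` and the spots `[1, p)` and `[w, q)` are taken. -/
def frontFill (len : ℕ → ℕ) (w : ℕ) : ℕ → List ℕ → List ℕ
  | _, [] => []
  | p, k :: L =>
    if p + len k ≤ w then k :: frontFill len w (p + len k) L else frontFill len w p L

theorem frontFill_sublist (len : ℕ → ℕ) (w : ℕ) :
    ∀ (p : ℕ) (L : List ℕ), (frontFill len w p L).Sublist L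
  | _, [] => List.Sublist.slnil
  | p, k :: L => by
    unfold frontFill
    split_ifs
    · exact (frontFill_sublist len w _ L).cons_cons k
    · exact (frontFill_sublist len w p L).cons k

theorem exists_mem_frontFill_le {len : ℕ → ℕ} {w j : ℕ} :
    ∀ {p : ℕ} {L : List ℕ}, L.Pairwise (· ≤ ·) → j ∈ L → p + len j ≤ w →
      ∃ k ∈ frontFill len w p L, k ≤ j
  | _, [], _, hj, _ => absurd hj List.not_mem_nil
  | p, k :: L, hL, hj, hfit => by
    rw [List.pairwise_cons] at hL
    by_cases hk : p + len k ≤ w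
    · refine ⟨k, by simp [frontFill, hk], ?_⟩
      rcases List.mem_cons.1 hj with rfl | hj
      exacts [le_rfl, hL.1 j hj]
    · have hj' : j ∈ L := (List.mem_cons.1 hj).resolve_left (by rintro rfl; exact hk hfit)
      obtain ⟨k', hk', hle⟩ := exists_mem_frontFill_le hL.2 hj' hfit
      exact ⟨k', by simpa [frontFill, hk] using hk', hle⟩

theorem Park.cons_inv {m pref len : ℕ} {occ : Finset ℕ} {rest : List (ℕ × ℕ)}
    (h : Park m occ ((pref, len) :: rest)) :
    ∃ s, ParksAt occ m pref len s ∧ Park m (occ ∪ Ico s (s + len)) rest := by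
  cases h with
  | cons _ _ _ _ s hs hrest => exact ⟨s, hs, hrest⟩

/-- The second inequality says that the cars not in the gap fit into `[q, m]`; it is stated
without truncated subtraction. -/
theorem sum_frontFill_of_park {len : ℕ → ℕ} {m w : ℕ} :
    ∀ {L : List ℕ} {p q : ℕ}, (∀ k ∈ L, 0 < len k) → 1 ≤ p → p ≤ w → w < q → q ≤ m + 1 →
      Park m (Ico 1 p ∪ Ico w q) (L.map fun k => (1, len k)) →
      p + ((frontFill len w p L).map len).sum ≤ w ∧
        q + (L.map len).sum ≤ m + 1 + ((frontFill len w p L).map len).sum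
  | [], _, _, _, _, hpw, _, hq, _ => by simpa [frontFill] using ⟨hpw, hq⟩
  | k :: L, p, q, hpos, hp, hpw, hwq, hq, hpark => by
    obtain ⟨s, hs, hrest⟩ := Park.cons_inv hpark
    have hk := hpos k List.mem_cons_self
    have hposL : ∀ k ∈ L, 0 < len k := fun k hk => hpos k (List.mem_cons_of_mem _ hk)
    by_cases hfit : p + len k ≤ w
    · have hsp : s = p := hs.eq_of_forall_lt
        (fun s' hs' h => h.2.2 s' (by simp; omega) (by have := h.1; simp; omega)) hp
        (fun u hu => by simp at hu ⊢; omega)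
      have hocc : Ico 1 p ∪ Ico w q ∪ Ico p (p + len k) = Ico 1 (p + len k) ∪ Ico w q := by
        ext u; simp only [mem_union, mem_Ico]; omega
      rw [hsp, hocc] at hrest
      have ih := sum_frontFill_of_park hposL (by omega) hfit hwq hq hrest
      simp only [frontFill, hfit, if_true, List.map_cons, List.sum_cons]
      omega
    · have hsq : s = q := hs.eq_of_forall_lt
        (fun s' hs' h => by
          -- a block starting below `q` meets `[1, p)` or `[w, q)`, or contains `w`
          have h₁ := h.2.2 s'
          have h₂ := h.2.2 w
          simp only [mem_Ico, mem_union, not_or, not_and, not_lt] at h₁ h₂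
          have := h.1
          omega)
        (by omega) (fun u hu => by simp at hu ⊢; omega)
      have hq' := hs.1.2.1
      have hocc : Ico 1 p ∪ Ico w q ∪ Ico q (q + len k) = Ico 1 p ∪ Ico w (q + len k) := by
        ext u; simp only [mem_union, mem_Ico]; omega
      rw [hsq, hocc] at hrest
      rw [hsq] at hq'
      have ih := sum_frontFill_of_park hposL hp hpw (by omega) hq' hrest
      simp only [frontFill, hfit, if_false, List.map_cons, List.sum_cons]
      omega

theorem map_getD_range'_cons {α : Type*} (a d : α) (l : List α) :
    (List.range' 1 l.length).map ((a :: l).getD · d) = l := by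
  refine List.ext_getElem (by simp) fun i h₁ h₂ => ?_
  simp only [List.getElem_map, List.getElem_range', Nat.one_mul, Nat.add_comm 1 i,
    List.getD_cons_succ, List.getD_eq_getElem _ _ h₂]

theorem zip_replicate_length {α β : Type*} (x : α) :
    ∀ l : List β, (List.replicate l.length x).zip l = l.map (x, ·)
  | [] => rfl
  | b :: l => by simp [List.replicate_succ, zip_replicate_length x l]

theorem sum_map_range'_one (f : ℕ → ℕ) (n : ℕ) :
    ((List.range' 1 n).map f).sum = ∑ i ∈ Ico 1 (n + 1), f i := by
  rw [← List.sum_toFinset f List.nodup_range', List.toFinset_range'_1, Nat.add_comm]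

theorem List.sum_eq_getD_zero_add_sum_Ico (y : List ℕ) :
    y.sum = y.getD 0 0 + ∑ i ∈ Finset.Ico 1 y.length, y.getD i 0 := by
  cases y with
  | nil => simp
  | cons a l =>
    conv_lhs => rw [List.sum_cons, ← map_getD_range'_cons a 0 l]
    rw [sum_map_range'_one, List.length_cons, List.getD_cons_zero]

theorem ne_nil_of_mem_Wset {y : List ℕ} {w : ℕ} (hw : w ∈ Wset y) : y ≠ [] := by
  rintro rfl
  simpa [PA] using (hw _ (List.Perm.refl _)).1

/-- The cars other than the first that park in front of it when the first car prefers `w` and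
all others prefer spot `1`. -/
def greedyFront (y : List ℕ) (w : ℕ) : Finset ℕ :=
  (frontFill (y.getD · 0) w 1 (List.range' 1 (y.length - 1))).toFinset

theorem greedyFront_subset (y : List ℕ) (w : ℕ) : greedyFront y w ⊆ Ico 1 y.length := by
  intro i hi
  have := (frontFill_sublist _ w 1 _).subset (List.mem_toFinset.1 hi)
  rw [List.mem_range'_1] at this
  simp only [mem_Ico]
  omega

theorem exists_mem_greedyFront_le {y : List ℕ} {w j : ℕ} (hj : j ∈ Ico 1 y.length)
    (hfit : 1 + y.getD j 0 ≤ w) : ∃ k ∈ greedyFront y w, k ≤ j := by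
  rw [mem_Ico] at hj
  have hjL : j ∈ List.range' 1 (y.length - 1) := List.mem_range'_1.2 (by omega)
  have hsorted : (List.range' 1 (y.length - 1)).Pairwise (· ≤ ·) :=
    (List.pairwise_lt_range' (s := 1)).imp le_of_lt
  obtain ⟨k, hk, hkj⟩ := exists_mem_frontFill_le (len := (y.getD · 0)) hsorted hjL hfit
  exact ⟨k, List.mem_toFinset.2 hk, hkj⟩

theorem sum_greedyFront_of_mem_Wset {y : List ℕ} (hpos : ∀ v ∈ y, 0 < v) {w : ℕ}
    (hw : w ∈ Wset y) : 1 + ∑ i ∈ greedyFront y w, y.getD i 0 = w := by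
  obtain ⟨a, l, rfl⟩ := List.exists_cons_of_ne_nil (ne_nil_of_mem_Wset hw)
  obtain ⟨-, hbound, hpark⟩ := hw (w :: List.replicate l.length 1) (by simp)
  have hzip : (w :: List.replicate l.length 1).zip (a :: l)
      = (w, a) :: (List.range' 1 l.length).map fun k => (1, (a :: l).getD k 0) := by
    conv_lhs => rw [List.zip_cons_cons, zip_replicate_length, ← map_getD_range'_cons a 0 l]
    simp [Function.comp_def]
  rw [hzip] at hpark
  obtain ⟨s, hs, hrest⟩ := Park.cons_inv hpark
  have hsw : s = w := hs.eq_of_forall_lt (fun s' hs' h => by have := h.1; omega) le_rfl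
    (by simp)
  have hm := hs.1.2.1
  rw [hsw] at hrest hm
  rw [show (∅ : Finset ℕ) ∪ Ico w (w + a) = Ico 1 1 ∪ Ico w (w + a) by simp] at hrest
  have ha := hpos a List.mem_cons_self
  have hposL : ∀ k ∈ List.range' 1 l.length, 0 < (a :: l).getD k 0 := fun k hk => by
    have hk' : k < (a :: l).length := by rw [List.mem_range'_1] at hk; simp; omega
    rw [List.getD_eq_getElem _ _ hk']
    exact hpos _ (List.getElem_mem hk')
  have hw1 : 1 ≤ w := (hbound w List.mem_cons_self).1
  have hfront := sum_frontFill_of_park hposL le_rfl hw1 (by omega) hm hrest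
  have hsum := List.sum_eq_getD_zero_add_sum_Ico (a :: l)
  rw [greedyFront, List.sum_toFinset _ ((frontFill_sublist _ w 1 _).nodup List.nodup_range')]
  rw [sum_map_range'_one] at hfront
  simp only [List.length_cons, List.getD_cons_zero, Nat.add_sub_cancel] at hsum hfront ⊢
  omega

theorem add_getD_one_le_of_mem_Wset {y : List ℕ} {w : ℕ} (hw : w ∈ Wset y)
    (hy : 2 ≤ y.length) : w + y.getD 1 0 ≤ y.sum + 1 := by
  obtain ⟨a, b, l, rfl⟩ : ∃ a b l, y = a :: b :: l := by
    match y, hy with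
    | a :: b :: l, _ => exact ⟨a, b, l, rfl⟩
  obtain ⟨-, -, hpark⟩ := hw (1 :: w :: List.replicate l.length 1)
    (by simp [List.replicate_succ])
  rw [List.zip_cons_cons, List.zip_cons_cons] at hpark
  obtain ⟨_, -, hrest⟩ := Park.cons_inv hpark
  obtain ⟨s, ⟨⟨hws, hsm, -⟩, -⟩, -⟩ := Park.cons_inv hrest
  simp only [List.getD_cons_succ, List.getD_cons_zero]
  omega

theorem injOn_and_eq_image_of_subset_image {α β : Type*} [DecidableEq β] {s : Set β}
    {P : Finset α} {f : α → β} (hsub : s ⊆ P.image f) (hcard : #P ≤ s.ncard) :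
    Set.InjOn f P ∧ s = P.image f := by
  have hle : s.ncard ≤ #(P.image f) :=
    (Set.ncard_le_ncard hsub (P.image f).finite_toSet).trans_eq (Set.ncard_coe_finset _)
  refine ⟨card_image_iff.1 (le_antisymm card_image_le (hcard.trans hle)), ?_⟩
  exact Set.eq_of_subset_of_ncard_le hsub
    (by rw [Set.ncard_coe_finset]; exact card_image_le.trans hcard)
    (P.image f).finite_toSet

theorem stmt18_general (n : ℕ) (y : List ℕ) (hylen : y.length = n)
    (hypos : ∀ v ∈ y, 0 < v) (hW : Set.ncard (Wset y) = 2 ^ (n - 1)) :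
    y.getD 1 0 ≤ y.getD 0 0 ∧
      ∀ j, 1 ≤ j → j < n - 1 →
        (∑ i ∈ Finset.Ico (j + 1) n, y.getD i 0) < y.getD j 0 := by
  subst hylen
  have hsub : Wset y ⊆ ((Ico 1 y.length).powerset.image
      fun S => 1 + ∑ i ∈ S, y.getD i 0 : Finset ℕ) := fun w hw =>
    mem_image.2 ⟨_, mem_powerset.2 (greedyFront_subset y w), sum_greedyFront_of_mem_Wset hypos hw⟩
  obtain ⟨hinj, hWeq⟩ := injOn_and_eq_image_of_subset_image hsub
    (by rw [card_powerset, Nat.card_Ico, hW])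
  have hmem : ∀ S ⊆ Ico 1 y.length, 1 + ∑ i ∈ S, y.getD i 0 ∈ Wset y := fun S hS => by
    rw [hWeq]; exact mem_image_of_mem _ (mem_powerset.2 hS)
  have hsum := y.sum_eq_getD_zero_add_sum_Ico
  refine ⟨?_, fun j hj1 hj2 => ?_⟩
  · rcases lt_or_ge y.length 2 with hy | hy
    · rw [List.getD_eq_default _ _ (by omega)]
      exact Nat.zero_le _
    · have := add_getD_one_le_of_mem_Wset (hmem _ Subset.rfl) hy
      omega
  · by_contra! hcon
    have hS : Ico (j + 1) y.length ⊆ Ico 1 y.length := Ico_subset_Ico (by omega) le_rfl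
    have hw := hmem _ hS
    have hfront : greedyFront y _ = Ico (j + 1) y.length :=
      hinj (mem_powerset.2 (greedyFront_subset _ _)) (mem_powerset.2 hS)
        (sum_greedyFront_of_mem_Wset hypos hw)
    obtain ⟨k, hk, hkj⟩ := exists_mem_greedyFront_le (mem_Ico.2 ⟨hj1, by omega⟩)
      (show 1 + y.getD j 0 ≤ 1 + ∑ i ∈ Ico (j + 1) y.length, y.getD i 0 by omega)
    rw [hfront, mem_Ico] at hk
    omega

/-- if `|W(y)| = 2^{n−1}` then `y₁ ≥ y₂` and `y_j > Σ_{i>j} y_i`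
for every `j ∈ [n−1]` with `j ≥ 2` (0-based: `1 ≤ j < n − 1`). -/
theorem stmt18 (n : ℕ) (hn : 0 < n) (y : List ℕ) (hylen : y.length = n)
    (hypos : ∀ v ∈ y, 0 < v) (hW : Set.ncard (Wset y) = 2 ^ (n - 1)) :
    y.getD 1 0 ≤ y.getD 0 0 ∧
      ∀ j, 1 ≤ j → j < n - 1 →
        (∑ i ∈ Finset.Ico (j + 1) n, y.getD i 0) < y.getD j 0 :=
  stmt18_general n y hylen hypos hW
end
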